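/- In any run of the closed-loop system under the on-line supervisor Ŝ, neutral transitions (transitions (x, σ, x') with ξ(x) ≤ ξ(x') < α) occur only finitely often: there is no infinite event sequence s ∈ Σ^ω consistent with Ŝ such that for all k there exists l ≥ k with ξ(δ_P(x_{P,0}, s[0..l])) ≤ ξ(δ_P(x_{P,0}, s[0..l+1])). -/

import Mathlib

open scoped Classical

/-- Extended (partial) transition function on finite event sequences. -/
def runOf {X E : Type} (δ : X → E → Option X) : List E → X → Option X
  | [], x => some x
  | e :: s, x => (δ x e).bind (runOf δ s)

/-- A string consisting only of unobservable events. -/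
def UOString {E : Type} (uo : E → Prop) (s : List E) : Prop := ∀ e ∈ s, uo e

/-- Natural projection erasing unobservable events. -/
noncomputable def proj {E : Type} (uo : E → Prop) (s : List E) : List E :=
  s.filter (fun e => decide (¬ uo e))

/-- Legal control pattern: events with some strictly rank-decreasing occurrence
within the unobservable reach of `x`. -/
def gammaLeg {X E : Type} (δ : X → E → Option X) (uo : E → Prop)
    (ξ : X → ℕ) (x : X) : Set E :=
  {σ | ∃ s y z, UOString uo s ∧ runOf δ s x = some y ∧ δ y σ = some z ∧ ξ z < ξ y}

/-- Unobservable reach of `x` under control pattern `γ`. -/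
def UR {X E : Type} (δ : X → E → Option X) (uo : E → Prop)
    (γ : Set E) (x : X) : Set X :=
  {x' | ∃ u : List E, (∀ e ∈ u, uo e ∧ e ∈ γ) ∧ runOf δ u x = some x'}

/-- Membership in the next-state estimate `NS(s_o)` after observation `s_o`. -/
inductive NSmem {X E : Type} (δ : X → E → Option X) (uo : E → Prop)
    (x0 : X) : List E → X → Prop
  | init : NSmem δ uo x0 [] x0
  | step {so : List E} {x x' x'' : X} {σ : E} :
      NSmem δ uo x0 so x →
      x' ∈ UR δ uo Set.univ x →
      ¬ uo σ → δ x' σ = some x'' → NSmem δ uo x0 (so ++ [σ]) x''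

/-- Joint legal control pattern of the state estimate. -/
def gammaLegNS {X E : Type} (δ : X → E → Option X) (uo : E → Prop) (ξ : X → ℕ)
    (x0 : X) (so : List E) : Set E :=
  {σ | ∃ x, NSmem δ uo x0 so x ∧ σ ∈ gammaLeg δ uo ξ x}

/-- Permissive control pattern at state `x` and step `k`. -/
def gammaPer {X E : Type} (δ : X → E → Option X) (uo : E → Prop) (ξ : X → ℕ)
    (η : ℕ → ℝ) (x : X) (k : ℕ) : Set E :=
  {σ | ∀ s z, UOString uo s → runOf δ (s ++ [σ]) x = some z → (ξ z : ℝ) < η k}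

/-- Joint permissive control pattern of the state estimate. -/
def gammaPerNS {X E : Type} (δ : X → E → Option X) (uo : E → Prop) (ξ : X → ℕ)
    (η : ℕ → ℝ) (x0 : X) (so : List E) (k : ℕ) : Set E :=
  {σ | ∀ x, NSmem δ uo x0 so x → σ ∈ gammaPer δ uo ξ η x k}

/-- The on-line supervisor's control action after observation `so`. -/
def supAct {X E : Type} (δ : X → E → Option X) (uo : E → Prop) (ξ : X → ℕ)
    (η : ℕ → ℝ) (x0 : X) (so : List E) : Set E :=
  gammaLegNS δ uo ξ x0 so ∪ gammaPerNS δ uo ξ η x0 so so.length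

/-- `ξ̂(x)`: min over controllable successors' ranks if no uncontrollable event
is defined at `x`, else max over uncontrollable successors' ranks. -/
noncomputable def hatXi {X E : Type} (δ : X → E → Option X) (uc : E → Prop)
    (ξ : X → ℕ) (x : X) : ℕ :=
  if ∀ e, uc e → δ x e = none then
    sInf {n | ∃ e y, ¬ uc e ∧ δ x e = some y ∧ ξ y = n}
  else
    sSup {n | ∃ e y, uc e ∧ δ x e = some y ∧ ξ y = n}

/-- The update operator `up_α(r, x)`. -/
noncomputable def upA {X : Type} (α : ℕ) (F : Set X) (x : X) (r : ℕ) : ℕ :=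
  if x ∉ F ∧ r < α then r + 1 else r

/-- Observability of the product automaton w.r.t. `ξ` and the projection. -/
def Observable {X E : Type} (δ : X → E → Option X) (uo : E → Prop)
    (ξ : X → ℕ) (x0 : X) : Prop :=
  ∀ s s' : List E, ∀ σ : E,
    (runOf δ s x0).isSome → (runOf δ s' x0).isSome →
    proj uo s = proj uo s' →
    (∃ y z, runOf δ s x0 = some y ∧ δ y σ = some z ∧ ξ z < ξ y) →
    (runOf δ (s' ++ [σ]) x0).isSome →
    ∃ y z, runOf δ s' x0 = some y ∧ δ y σ = some z ∧ ξ z < ξ y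

/-- The list of states visited along a run. -/
def visited {X E : Type} (δ : X → E → Option X) : List E → X → Option (List X)
  | [], x => some [x]
  | e :: s, x => (δ x e).bind fun y => (visited δ s y).map (fun l => x :: l)

/-!
Every event the supervisor enables is either legal or permissive. By observability, a legal
event that is actually executed decreases the rank, because some state consistent with the
observation decreases the rank on it. A permissive event leads to a state of rank below
`η (|s_o|)`. Once the observation is long enough, `η (|s_o|) = 0`, so only rank-decreasing
transitions remain and no neutral transition can occur.
-/

section Run

variable {X E : Type} (δ : X → E → Option X)

theorem runOf_append (a b : List E) (x : X) :
    runOf δ (a ++ b) x = (runOf δ a x).bind (runOf δ b) := by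
  induction a generalizing x with
  | nil => rfl
  | cons e t ih =>
    simp only [List.cons_append, runOf]
    cases δ x e <;> simp [ih]

theorem runOf_singleton (e : E) (x : X) : runOf δ [e] x = δ x e := by
  cases h : δ x e <;> simp [runOf, h]

theorem runOf_append_singleton {p : List E} {x y : X} (h : runOf δ p x = some y) (e : E) :
    runOf δ (p ++ [e]) x = δ y e := by
  rw [runOf_append, h, Option.bind_some, runOf_singleton]

end Run

section Projection

variable {E : Type} (uo : E → Prop)

theorem proj_append (a b : List E) : proj uo (a ++ b) = proj uo a ++ proj uo b :=
  List.filter_append a b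

theorem UOString.proj_eq_nil {u : List E} (h : UOString uo u) : proj uo u = [] :=
  List.filter_eq_nil_iff.mpr fun e he => by simpa using h e he

theorem proj_singleton_of_not_uo {e : E} (h : ¬ uo e) : proj uo [e] = [e] := by
  simp [proj, h]

theorem UOString.append_singleton {u : List E} (hu : UOString uo u) {e : E} (he : uo e) :
    UOString uo (u ++ [e]) := by
  simpa [UOString, or_imp, forall_and] using And.intro hu he

end Projection

section StateEstimate

variable {X E : Type} {δ : X → E → Option X} {uo : E → Prop} {x0 : X}

theorem NSmem.exists_runOf {so : List E} {x : X} (h : NSmem δ uo x0 so x) :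
    ∃ t, proj uo t = so ∧ runOf δ t x0 = some x := by
  induction h with
  | init => exact ⟨[], rfl, rfl⟩
  | @step _ _ _ _ σ _ hUR hσ hδ ih =>
    obtain ⟨t, hpt, hrt⟩ := ih
    obtain ⟨u, hu, hru⟩ := hUR
    refine ⟨t ++ u ++ [σ], ?_, ?_⟩
    · rw [proj_append, proj_append, hpt, UOString.proj_eq_nil uo (fun e he => (hu e he).1),
        proj_singleton_of_not_uo uo hσ, List.append_nil]
    · rw [runOf_append_singleton δ (by rw [runOf_append, hrt, Option.bind_some, hru]), hδ]

theorem exists_NSmem_of_runOf {p : List E} {y : X} (hy : runOf δ p x0 = some y) :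
    ∃ x u, NSmem δ uo x0 (proj uo p) x ∧ UOString uo u ∧ runOf δ u x = some y := by
  induction p using List.reverseRecOn generalizing y with
  | nil =>
    cases hy
    exact ⟨x0, [], NSmem.init, fun _ h => absurd h List.not_mem_nil, rfl⟩
  | append_singleton t e ih =>
    rw [runOf_append] at hy
    obtain ⟨y₁, ht, hy⟩ := Option.bind_eq_some_iff.mp hy
    rw [runOf_singleton] at hy
    obtain ⟨x, u, hNS, hu, hru⟩ := ih ht
    by_cases he : uo e
    · refine ⟨x, u ++ [e], ?_, hu.append_singleton uo he, ?_⟩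
      · rwa [proj_append, UOString.proj_eq_nil uo (u := [e]) (by simpa [UOString]),
          List.append_nil]
      · rw [runOf_append_singleton δ hru, hy]
    · refine ⟨y, [], ?_, fun _ h => absurd h List.not_mem_nil, rfl⟩
      rw [proj_append, proj_singleton_of_not_uo uo he]
      exact NSmem.step hNS ⟨u, fun e' he' => ⟨hu e' he', trivial⟩, hru⟩ he hy

end StateEstimate

section Supervisor

variable {X E : Type} {δ : X → E → Option X} {uo : E → Prop} {ξ : X → ℕ} {x0 : X}
  {p : List E} {σ : E} {y z : X}

theorem rank_lt_of_mem_gammaLegNS (hobs : Observable δ uo ξ x0) (hy : runOf δ p x0 = some y)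
    (hz : δ y σ = some z) (hσ : σ ∈ gammaLegNS δ uo ξ x0 (proj uo p)) : ξ z < ξ y := by
  obtain ⟨x, hNS, u, a, b, hu, hru, hab, hlt⟩ := hσ
  obtain ⟨t, hpt, hrt⟩ := hNS.exists_runOf
  have hrun : runOf δ (t ++ u) x0 = some a := by rw [runOf_append, hrt, Option.bind_some, hru]
  have hproj : proj uo (t ++ u) = proj uo p := by
    rw [proj_append, hpt, hu.proj_eq_nil, List.append_nil]
  obtain ⟨y', z', hy', hz', hlt'⟩ := hobs (t ++ u) p σ (by simp [hrun]) (by simp [hy]) hproj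
    ⟨a, b, hrun, hab, hlt⟩ (by simp [runOf_append_singleton δ hy, hz])
  cases hy.symm.trans hy'
  cases hz.symm.trans hz'
  exact hlt'

theorem rank_lt_of_mem_gammaPerNS {η : ℕ → ℝ} {k : ℕ} (hy : runOf δ p x0 = some y)
    (hz : δ y σ = some z) (hσ : σ ∈ gammaPerNS δ uo ξ η x0 (proj uo p) k) : (ξ z : ℝ) < η k := by
  obtain ⟨x, u, hNS, hu, hru⟩ := exists_NSmem_of_runOf hy
  exact hσ x hNS u z hu (by rw [runOf_append_singleton δ hru, hz])

theorem rank_lt_of_mem_supAct_of_le_zero {η : ℕ → ℝ} (hobs : Observable δ uo ξ x0)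
    (hη : η (proj uo p).length ≤ 0) (hy : runOf δ p x0 = some y) (hz : δ y σ = some z)
    (hσ : σ ∈ supAct δ uo ξ η x0 (proj uo p)) : ξ z < ξ y := by
  rcases hσ with hleg | hper
  · exact rank_lt_of_mem_gammaLegNS hobs hy hz hleg
  · have := (rank_lt_of_mem_gammaPerNS hy hz hper).trans_le hη
    exact absurd this (Nat.cast_nonneg _).not_gt

end Supervisor

theorem List.ofFn_fin_succ_eq_append {α : Type*} (s : ℕ → α) (n : ℕ) :
    (List.ofFn fun i : Fin (n + 1) => s i) = (List.ofFn fun i : Fin n => s i) ++ [s n] :=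
  List.ofFn_succ_last

theorem monotone_length_proj_ofFn {E : Type} (uo : E → Prop) (s : ℕ → E) :
    Monotone fun k => (proj uo (List.ofFn fun i : Fin k => s i)).length :=
  monotone_nat_of_le_succ fun k => by
    simp only [List.ofFn_fin_succ_eq_append, proj_append, List.length_append]
    omega

theorem stmt13_general {X E : Type} (δ : X → E → Option X) (uo : E → Prop)
    (x0 : X) (ξ : X → ℕ) (α : ℕ) (η : ℕ → ℝ)
    (hmono : ∀ k, η (k + 1) ≤ η k)
    (hzero : ∃ k, η k = 0)
    (hobs : Observable δ uo ξ x0)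
    (s : ℕ → E)
    (hcons : ∀ k : ℕ,
      s k ∈ supAct δ uo ξ η x0 (proj uo (List.ofFn fun i : Fin k => s i)))
    (hobslen : ∀ n : ℕ,
      ∃ k : ℕ, n ≤ (proj uo (List.ofFn fun i : Fin k => s i)).length) :
    ¬ (∀ k : ℕ, ∃ l : ℕ, k ≤ l ∧ ∃ y z : X,
        runOf δ (List.ofFn fun i : Fin (l + 1) => s i) x0 = some y ∧
        runOf δ (List.ofFn fun i : Fin (l + 2) => s i) x0 = some z ∧
        ξ y ≤ ξ z ∧ ξ z < α) := by
  intro hneutral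
  obtain ⟨K, hK⟩ := hzero
  obtain ⟨k, hk⟩ := hobslen K
  obtain ⟨l, hkl, y, z, hy, hz, hyz, -⟩ := hneutral k
  have hstep : δ y (s (l + 1)) = some z := by
    rwa [List.ofFn_fin_succ_eq_append s (l + 1), runOf_append_singleton δ hy] at hz
  have hη : η (proj uo (List.ofFn fun i : Fin (l + 1) => s i)).length ≤ 0 :=
    hK ▸ antitone_nat_of_succ_le hmono
      (hk.trans (monotone_length_proj_ofFn uo s (by omega : k ≤ l + 1)))
  exact absurd (rank_lt_of_mem_supAct_of_le_zero hobs hη hy hstep (hcons (l + 1))) hyz.not_gt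

/-- along any infinite run consistent with the on-line supervisor
(with unbounded observation length), neutral transitions occur only finitely
often. -/
theorem stmt13 {X E : Type} (δ : X → E → Option X) (uo : E → Prop)
    (x0 : X) (ξ : X → ℕ) (α : ℕ) (η : ℕ → ℝ)
    (hη0 : η 0 ≤ (α : ℝ))
    (hmono : ∀ k, η (k + 1) ≤ η k)
    (hzero : ∃ k, η k = 0)
    (hobs : Observable δ uo ξ x0)
    (s : ℕ → E)
    (hdef : ∀ k : ℕ, (runOf δ (List.ofFn fun i : Fin k => s i) x0).isSome)
    (hcons : ∀ k : ℕ,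
      s k ∈ supAct δ uo ξ η x0 (proj uo (List.ofFn fun i : Fin k => s i)))
    (hobslen : ∀ n : ℕ,
      ∃ k : ℕ, n ≤ (proj uo (List.ofFn fun i : Fin k => s i)).length) :
    ¬ (∀ k : ℕ, ∃ l : ℕ, k ≤ l ∧ ∃ y z : X,
        runOf δ (List.ofFn fun i : Fin (l + 1) => s i) x0 = some y ∧
        runOf δ (List.ofFn fun i : Fin (l + 2) => s i) x0 = some z ∧
        ξ y ≤ ξ z ∧ ξ z < α) :=
  stmt13_general δ uo x0 ξ α η hmono hzero hobs s hcons hobslen
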